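/- Let X be a locally compact metric space, F : X → 𝒫(X) an upper semicontinuous multivalued map with compact values, and N ⊆ X compact. Then: (i) the sets Inv⁺N, Inv⁻N and Inv N are compact; (ii) if A is compact with Inv⁻N ⊆ A ⊆ N, then F_N⁺(A) is compact. -/
import Mathlib


open Set Topology

/-- The image of a set under a multivalued map. -/
def MVImage {Y : Type*} (F : Y → Set Y) (A : Set Y) : Set Y :=
  ⋃ y ∈ A, F y

/-- Upper semicontinuity of a multivalued map: the large counter image of every
closed set is closed. -/
def IsUSC {Y : Type*} [TopologicalSpace Y] (F : Y → Set Y) : Prop :=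
  ∀ B : Set Y, IsClosed B → IsClosed {y | (F y ∩ B).Nonempty}

/-- The invariant part of `N` with respect to `F`: points admitting a full
solution (in `N`) through them. -/
def InvPart {Y : Type*} (F : Y → Set Y) (N : Set Y) : Set Y :=
  {y | ∃ σ : ℤ → Y, (∀ n : ℤ, σ n ∈ N) ∧ σ 0 = y ∧ ∀ n : ℤ, σ (n + 1) ∈ F (σ n)}

/-- The `F`-boundary of a set `A`: `cl A ∩ cl (F(A) \ A)`. -/
def FBoundary {Y : Type*} [TopologicalSpace Y] (F : Y → Set Y) (A : Set Y) : Set Y :=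
  closure A ∩ closure (MVImage F A \ A)

/-- `(P₁, P₂)` is a weak index pair for `F` in `N`. -/
structure IsWeakIndexPair {Y : Type*} [TopologicalSpace Y] (F : Y → Set Y)
    (N P₁ P₂ : Set Y) : Prop where
  compact₁ : IsCompact P₁
  compact₂ : IsCompact P₂
  subset₂₁ : P₂ ⊆ P₁
  subset₁N : P₁ ⊆ N
  mapsInto₁ : MVImage F P₁ ∩ N ⊆ P₁
  mapsInto₂ : MVImage F P₂ ∩ N ⊆ P₂
  fBoundary_subset : FBoundary F P₁ ⊆ P₂
  inv_subset : InvPart F N ⊆ interior (P₁ \ P₂)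
  diff_subset : P₁ \ P₂ ⊆ interior N

/-- The positive invariant part of `N` with respect to `F`: points admitting a
forward solution (in `N`) through them. -/
def InvPlus {Y : Type*} (F : Y → Set Y) (N : Set Y) : Set Y :=
  {y | ∃ σ : ℕ → Y, (∀ n : ℕ, σ n ∈ N) ∧ σ 0 = y ∧ ∀ n : ℕ, σ (n + 1) ∈ F (σ n)}

/-- The negative invariant part of `N` with respect to `F`: points admitting a
backward solution (in `N`) through them (`σ k` stands for the value at `-k`). -/
def InvMinus {Y : Type*} (F : Y → Set Y) (N : Set Y) : Set Y :=
  {y | ∃ σ : ℕ → Y, (∀ n : ℕ, σ n ∈ N) ∧ σ 0 = y ∧ ∀ n : ℕ, σ n ∈ F (σ (n + 1))}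

/-- `FN F N n x` is the set of points reachable from `x` by a solution of
length `n` staying in `N` (the map `F_{N,n}`). -/
def FN {Y : Type*} (F : Y → Set Y) (N : Set Y) (n : ℕ) (x : Y) : Set Y :=
  {y | ∃ σ : ℕ → Y, σ 0 = x ∧ σ n = y ∧ (∀ k ≤ n, σ k ∈ N) ∧
    ∀ k < n, σ (k + 1) ∈ F (σ k)}

/-- `FNneg F N n x` is the set of points from which `x` is reachable by a
solution of length `n` staying in `N` (the map `F_{N,-n}`). -/
def FNneg {Y : Type*} (F : Y → Set Y) (N : Set Y) (n : ℕ) (x : Y) : Set Y :=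
  {y | ∃ σ : ℕ → Y, σ 0 = y ∧ σ n = x ∧ (∀ k ≤ n, σ k ∈ N) ∧
    ∀ k < n, σ (k + 1) ∈ F (σ k)}

/-- The map `F_N⁺`. -/
def FNplus {Y : Type*} (F : Y → Set Y) (N : Set Y) (x : Y) : Set Y :=
  ⋃ n : ℕ, FN F N n x

/-- The map `F_N⁻`. -/
def FNminus {Y : Type*} (F : Y → Set Y) (N : Set Y) (x : Y) : Set Y :=
  ⋃ n : ℕ, FNneg F N n x


section AuxPDW

variable {X : Type*} [MetricSpace X]

lemma auxPDW_graph_closed (F : X → Set X) (hF : IsUSC F) (hFc : ∀ x, IsCompact (F x)) :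
    IsClosed {p : X × X | p.2 ∈ F p.1} := by
  rw [← isOpen_compl_iff, isOpen_iff_mem_nhds]
  rintro ⟨x, y⟩ hp
  simp only [mem_compl_iff, mem_setOf_eq] at hp
  obtain ⟨ε, hε, hball⟩ := Metric.isOpen_iff.1 (hFc x).isClosed.isOpen_compl y hp
  have hU : IsOpen {z | (F z ∩ Metric.closedBall y (ε/2)).Nonempty}ᶜ :=
    (hF _ Metric.isClosed_closedBall).isOpen_compl
  have hxU : x ∈ {z | (F z ∩ Metric.closedBall y (ε/2)).Nonempty}ᶜ := by
    rintro ⟨w, hw1, hw2⟩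
    exact hball (Metric.closedBall_subset_ball (by linarith) hw2) hw1
  rw [mem_nhds_prod_iff]
  refine ⟨_, hU.mem_nhds hxU, Metric.ball y (ε/2),
    Metric.isOpen_ball.mem_nhds (Metric.mem_ball_self (by linarith)), ?_⟩
  rintro ⟨z, w⟩ ⟨hz, hw⟩ hmem
  exact hz ⟨w, hmem, Metric.ball_subset_closedBall hw⟩

lemma auxPDW_steps_closed {ι κ : Type*} (G : Set (X × X)) (hG : IsClosed G)
    (a b : κ → ι) : IsClosed {σ : ι → X | ∀ k, (σ (a k), σ (b k)) ∈ G} := by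
  have h : {σ : ι → X | ∀ k, (σ (a k), σ (b k)) ∈ G} =
      ⋂ k, (fun σ : ι → X => (σ (a k), σ (b k))) ⁻¹' G := by
    ext σ; simp [mem_iInter]
  rw [h]
  exact isClosed_iInter fun k =>
    hG.preimage ((continuous_apply (a k)).prodMk (continuous_apply (b k)))

lemma auxPDW_K_compact {ι κ : Type*} (N : Set X) (hN : IsCompact N) (G : Set (X × X))
    (hG : IsClosed G) (a b : κ → ι) :
    IsCompact ((univ.pi fun _ : ι => N) ∩ {σ | ∀ k, (σ (a k), σ (b k)) ∈ G}) :=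
  (isCompact_univ_pi fun _ => hN).inter_right (auxPDW_steps_closed G hG a b)

/-- Points in `N` admitting a backward solution of length `m` in `N`. -/
def CsetPDW (F : X → Set X) (N : Set X) (m : ℕ) : Set X :=
  {y | ∃ σ : ℕ → X, σ 0 = y ∧ (∀ k, σ k ∈ N) ∧ ∀ k < m, σ k ∈ F (σ (k + 1))}

lemma CsetPDW_compact (F : X → Set X) (N : Set X) (hN : IsCompact N)
    (hG : IsClosed {p : X × X | p.2 ∈ F p.1}) (m : ℕ) : IsCompact (CsetPDW F N m) := by
  have hK := auxPDW_K_compact N hN {p : X × X | p.2 ∈ F p.1} hG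
    (fun k : Fin m => (k : ℕ) + 1) (fun k : Fin m => (k : ℕ))
  have h : CsetPDW F N m = (fun σ : ℕ → X => σ 0) ''
      ((univ.pi fun _ : ℕ => N) ∩
        {σ : ℕ → X | ∀ k : Fin m, (σ ((k : ℕ) + 1), σ (k : ℕ)) ∈ {p : X × X | p.2 ∈ F p.1}}) := by
    ext y
    constructor
    · rintro ⟨σ, h0, hn, hs⟩
      exact ⟨σ, ⟨fun i _ => hn i, fun k => hs k k.isLt⟩, h0⟩
    · rintro ⟨σ, ⟨hn, hs⟩, h0⟩
      exact ⟨σ, h0, fun k => hn k (mem_univ k), fun k hk => hs ⟨k, hk⟩⟩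
  rw [h]
  exact hK.image (continuous_apply 0)

lemma CsetPDW_iInter_subset (F : X → Set X) (N : Set X) (hN : IsCompact N)
    (hG : IsClosed {p : X × X | p.2 ∈ F p.1}) :
    (⋂ m, CsetPDW F N m) ⊆ InvMinus F N := by
  intro y hy
  set T : ℕ → Set (ℕ → X) := fun m =>
    ((univ.pi fun _ : ℕ => N) ∩ {σ | ∀ k < m, σ k ∈ F (σ (k + 1))}) ∩ {σ | σ 0 = y} with hT
  have hTd : ∀ m, T (m + 1) ⊆ T m := by
    rintro m σ ⟨⟨h1, h2⟩, h3⟩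
    exact ⟨⟨h1, fun k hk => h2 k (Nat.lt_succ_of_lt hk)⟩, h3⟩
  have hTn : ∀ m, (T m).Nonempty := by
    intro m
    obtain ⟨σ, h0, hn, hs⟩ := mem_iInter.1 hy m
    exact ⟨σ, ⟨⟨fun i _ => hn i, hs⟩, h0⟩⟩
  have hTcl : ∀ m, IsClosed (T m) := by
    intro m
    refine ((isClosed_set_pi fun i _ => hN.isClosed).inter ?_).inter
      (isClosed_eq (continuous_apply 0) continuous_const)
    have h : {σ : ℕ → X | ∀ k < m, σ k ∈ F (σ (k + 1))} =
        {σ : ℕ → X | ∀ k : Fin m, (σ ((k : ℕ) + 1), σ (k : ℕ)) ∈ {p : X × X | p.2 ∈ F p.1}} := by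
      ext σ
      constructor
      · intro h k; exact h k k.isLt
      · intro h k hk; exact h ⟨k, hk⟩
    rw [h]
    exact auxPDW_steps_closed _ hG _ _
  have hT0c : IsCompact (T 0) :=
    IsCompact.of_isClosed_subset (isCompact_univ_pi fun _ => hN) (hTcl 0)
      (by rintro σ ⟨⟨h1, _⟩, _⟩; exact h1)
  obtain ⟨σ, hσ⟩ :=
    IsCompact.nonempty_iInter_of_sequence_nonempty_isCompact_isClosed T hTd hTn hT0c hTcl
  rw [mem_iInter] at hσ
  obtain ⟨⟨h1, _⟩, h3⟩ := hσ 0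
  exact ⟨σ, fun n => h1 n (mem_univ n), h3, fun n => (hσ (n + 1)).1.2 n (Nat.lt_succ_self n)⟩

lemma auxPDW_img (F : X → Set X) (S N : Set X) :
    Prod.snd '' ({p : X × X | p.2 ∈ F p.1} ∩ S ×ˢ N) = {y | y ∈ N ∧ ∃ z ∈ S, y ∈ F z} := by
  ext y
  constructor
  · rintro ⟨⟨z, w⟩, ⟨hg, hz, hw⟩, rfl⟩
    exact ⟨hw, z, hz, hg⟩
  · rintro ⟨hyN, z, hz, hyF⟩
    exact ⟨(z, y), ⟨hyF, hz, hyN⟩, rfl⟩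

lemma BsetPDW_zero (F : X → Set X) (N A : Set X) (hAN : A ⊆ N) :
    (⋃ x ∈ A, FN F N 0 x) = A := by
  ext y
  simp only [mem_iUnion, exists_prop]
  constructor
  · rintro ⟨x, hx, σ, h0, h1, _, _⟩
    rw [← h1, h0]; exact hx
  · intro hy
    exact ⟨y, hy, fun _ => y, rfl, rfl, fun k _ => hAN hy,
      fun k hk => absurd hk (Nat.not_lt_zero k)⟩

lemma BsetPDW_succ (F : X → Set X) (N A : Set X) (n : ℕ) :
    (⋃ x ∈ A, FN F N (n + 1) x) = {y | y ∈ N ∧ ∃ z ∈ (⋃ x ∈ A, FN F N n x), y ∈ F z} := by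
  ext y
  simp only [mem_iUnion, exists_prop, mem_setOf_eq]
  constructor
  · rintro ⟨x, hx, σ, h0, hn1, hmem, hstep⟩
    refine ⟨hn1 ▸ hmem (n + 1) le_rfl, σ n, ⟨x, hx, σ, h0, rfl,
      fun k hk => hmem k (hk.trans (Nat.le_succ n)),
      fun k hk => hstep k (hk.trans (Nat.lt_succ_self n))⟩, ?_⟩
    rw [← hn1]
    exact hstep n (Nat.lt_succ_self n)
  · rintro ⟨hyN, z, ⟨x, hx, σ, h0, hn, hmem, hsteps⟩, hyF⟩
    refine ⟨x, hx, fun k => if k ≤ n then σ k else y, by simp [h0], by simp, ?_, ?_⟩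
    · intro k hk
      by_cases h : k ≤ n
      · simpa [h] using hmem k h
      · simpa [h] using hyN
    · intro k hk
      rcases Nat.lt_succ_iff_lt_or_eq.1 hk with h | h
      · have hk1 : k + 1 ≤ n := h
        have hk0 : k ≤ n := Nat.le_of_lt h
        simp only [if_pos hk1, if_pos hk0]
        exact hsteps k h
      · have h1 : ¬ (k + 1 ≤ n) := by omega
        have h2 : k ≤ n := by omega
        simp only [if_neg h1, if_pos h2]
        rw [h, hn]
        exact hyF

lemma BsetPDW_subset_N (F : X → Set X) (N A : Set X) (n : ℕ) :
    (⋃ x ∈ A, FN F N n x) ⊆ N := by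
  rintro y hy
  simp only [mem_iUnion, exists_prop] at hy
  obtain ⟨x, hx, σ, h0, hn, hmem, hstep⟩ := hy
  exact hn ▸ hmem n le_rfl

lemma BsetPDW_subset_Cset (F : X → Set X) (N A : Set X) {m n : ℕ} (hmn : m ≤ n) :
    (⋃ x ∈ A, FN F N n x) ⊆ CsetPDW F N m := by
  rintro y hy
  simp only [mem_iUnion, exists_prop] at hy
  obtain ⟨x, hx, σ, h0, hn, hmem, hstep⟩ := hy
  refine ⟨fun k => σ (n - k), by simp [hn], fun k => hmem _ (Nat.sub_le n k), ?_⟩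
  intro k hk
  have h1 : n - (k + 1) < n := by omega
  have h2 : n - (k + 1) + 1 = n - k := by omega
  have h3 := hstep (n - (k + 1)) h1
  rwa [h2] at h3

end AuxPDW

/-- For compact `N`: (i) `Inv⁺N`, `Inv⁻N` and `Inv N` are compact; (ii) if `A`
is compact with `Inv⁻N ⊆ A ⊆ N`, then `F_N⁺(A)` is compact. -/

theorem invParts_compact_and_forwardImage_compact {X : Type*} [MetricSpace X]
    [LocallyCompactSpace X]
    (F : X → Set X) (hF : IsUSC F) (hFc : ∀ x, IsCompact (F x))
    (N : Set X) (hN : IsCompact N) :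
    (IsCompact (InvPlus F N) ∧ IsCompact (InvMinus F N) ∧
      IsCompact (InvPart F N)) ∧
    (∀ A : Set X, IsCompact A → InvMinus F N ⊆ A → A ⊆ N →
      IsCompact (⋃ x ∈ A, FNplus F N x)) := by
  have hG : IsClosed {p : X × X | p.2 ∈ F p.1} := auxPDW_graph_closed F hF hFc
  constructor
  · refine ⟨?_, ?_, ?_⟩
    · have hK := auxPDW_K_compact N hN {p : X × X | p.2 ∈ F p.1} hG
        (fun k : ℕ => k) (fun k : ℕ => k + 1)
      have he : InvPlus F N = (fun σ : ℕ → X => σ 0) ''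
          ((univ.pi fun _ : ℕ => N) ∩
            {σ : ℕ → X | ∀ k : ℕ, (σ k, σ (k + 1)) ∈ {p : X × X | p.2 ∈ F p.1}}) := by
        ext y
        constructor
        · rintro ⟨σ, hn, h0, hs⟩
          exact ⟨σ, ⟨fun i _ => hn i, hs⟩, h0⟩
        · rintro ⟨σ, ⟨hn, hs⟩, h0⟩
          exact ⟨σ, fun n => hn n (mem_univ n), h0, hs⟩
      rw [he]
      exact hK.image (continuous_apply 0)
    · have hK := auxPDW_K_compact N hN {p : X × X | p.2 ∈ F p.1} hG
        (fun k : ℕ => k + 1) (fun k : ℕ => k)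
      have he : InvMinus F N = (fun σ : ℕ → X => σ 0) ''
          ((univ.pi fun _ : ℕ => N) ∩
            {σ : ℕ → X | ∀ k : ℕ, (σ (k + 1), σ k) ∈ {p : X × X | p.2 ∈ F p.1}}) := by
        ext y
        constructor
        · rintro ⟨σ, hn, h0, hs⟩
          exact ⟨σ, ⟨fun i _ => hn i, hs⟩, h0⟩
        · rintro ⟨σ, ⟨hn, hs⟩, h0⟩
          exact ⟨σ, fun n => hn n (mem_univ n), h0, hs⟩
      rw [he]
      exact hK.image (continuous_apply 0)
    · have hK := auxPDW_K_compact N hN {p : X × X | p.2 ∈ F p.1} hG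
        (fun k : ℤ => k) (fun k : ℤ => k + 1)
      have he : InvPart F N = (fun σ : ℤ → X => σ 0) ''
          ((univ.pi fun _ : ℤ => N) ∩
            {σ : ℤ → X | ∀ k : ℤ, (σ k, σ (k + 1)) ∈ {p : X × X | p.2 ∈ F p.1}}) := by
        ext y
        constructor
        · rintro ⟨σ, hn, h0, hs⟩
          exact ⟨σ, ⟨fun i _ => hn i, hs⟩, h0⟩
        · rintro ⟨σ, ⟨hn, hs⟩, h0⟩
          exact ⟨σ, fun n => hn n (mem_univ n), h0, hs⟩
      rw [he]
      exact hK.image (continuous_apply 0)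
  · intro A hA hIA hAN
    have hUeq : (⋃ x ∈ A, FNplus F N x) = ⋃ n : ℕ, ⋃ x ∈ A, FN F N n x := by
      ext y
      simp only [mem_iUnion, exists_prop, FNplus]
      tauto
    rw [hUeq]
    have hBc : ∀ n : ℕ, IsCompact (⋃ x ∈ A, FN F N n x) := by
      intro n
      induction n with
      | zero => rw [BsetPDW_zero F N A hAN]; exact hA
      | succ n ih =>
        rw [BsetPDW_succ F N A n, ← auxPDW_img F _ N]
        exact (((ih.prod hN).inter_left hG).image continuous_snd)
    have hUcl : IsClosed (⋃ n : ℕ, ⋃ x ∈ A, FN F N n x) := by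
      refine isClosed_of_closure_subset ?_
      intro w hw
      by_cases hwU : w ∈ ⋃ n : ℕ, ⋃ x ∈ A, FN F N n x
      · exact hwU
      exfalso
      have hwC : ∀ m : ℕ, w ∈ CsetPDW F N m := by
        intro m
        have hsplit : (⋃ n : ℕ, ⋃ x ∈ A, FN F N n x) ⊆
            (⋃ n ∈ Set.Iic m, ⋃ x ∈ A, FN F N n x) ∪ CsetPDW F N m := by
          intro y hy
          obtain ⟨n, hn⟩ := mem_iUnion.1 hy
          rcases le_or_gt n m with h | h
          · exact Or.inl (mem_biUnion h hn)
          · exact Or.inr (BsetPDW_subset_Cset F N A h.le hn)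
        have hcl : IsClosed ((⋃ n ∈ Set.Iic m, ⋃ x ∈ A, FN F N n x) ∪ CsetPDW F N m) :=
          ((Set.finite_Iic m).isCompact_biUnion fun n _ => hBc n).isClosed.union
            (CsetPDW_compact F N hN hG m).isClosed
        rcases closure_minimal hsplit hcl hw with h | h
        · obtain ⟨n, _, hn⟩ := mem_iUnion₂.1 h
          exact absurd (mem_iUnion.2 ⟨n, hn⟩) hwU
        · exact h
      have hwA : w ∈ A := hIA (CsetPDW_iInter_subset F N hN hG (mem_iInter.2 hwC))
      have : w ∈ ⋃ x ∈ A, FN F N 0 x := (BsetPDW_zero F N A hAN).symm ▸ hwA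
      exact hwU (mem_iUnion.2 ⟨0, this⟩)
    exact hN.of_isClosed_subset hUcl (iUnion_subset fun n => BsetPDW_subset_N F N A n)
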